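/- arXiv:2502.06480 — 3 statements merged into one kernel-verified Lean document; each statement's English description precedes it below -/
import Mathlib

section
/- Let p ∈ (0,1), let (X_i)_{i≥1} be i.i.d. random variables on a probability space with P(X_i = k) = p(1−p)^{k−1} for every integer k ≥ 1 (the geometric distribution on the positive integers with success probability p, so E[X_i] = 1/p), and set S_n := X_1 + ⋯ + X_n. Then for every real c ≥ 2, every real t ≥ 0 and every integer n ≥ 1, P(S_n ≥ c·(n/p + t)) ≤ (1−p)^t · exp(−(2c−3)·n/4). -/
open MeasureTheory ProbabilityTheory

/-!
Chernoff bound. A geometric variable has moment generating function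
`E[e^{sX}] = p eˢ / (1 - (1 - p) eˢ)` for `(1 - p) eˢ < 1`, so by independence
`P(S_n ≥ a) ≤ e^{-sa} (p eˢ / (1 - (1 - p) eˢ))ⁿ`. Take `s = log (1 / (1 - p)) - p / 2`, for which
`(1 - p) eˢ = e^{-p/2}`. Then `1 - e^{-p/2} = 2 e^{-p/4} sinh (p/4) ≥ (p/2) e^{-p/4}` bounds the
mgf by `2 e^{s + p/4}`, and `log (1 / (1 - p)) ≥ 2p / (2 - p)` (first term of the series of
`log ((1 + x) / (1 - x))` at `x = p / (2 - p)`) together with `log 2 < 3/4` turns the comparison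
of exponents into a polynomial inequality in `p` and `c`. For the `t`-part, `c ≥ 2` gives
`s c ≥ log (1 / (1 - p))`, so `e^{-sct} ≤ (1 - p)^t`.
-/

open Real

section GeometricLaw

variable {Ω : Type*} [MeasurableSpace Ω] {μ : Measure Ω}

lemma lintegral_comp_eq_tsum {α : Type*} [MeasurableSpace α] [Countable α]
    [MeasurableSingletonClass α] {X : Ω → α} (hX : Measurable X) (f : α → ENNReal) :
    ∫⁻ ω, f (X ω) ∂μ = ∑' a, f a * μ {ω | X ω = a} := by
  rw [← lintegral_map (measurable_of_countable f) hX, lintegral_countable']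
  congr 1 with a
  rw [Measure.map_apply hX (measurableSet_singleton a)]
  rfl

/-- The mass at `0` is left free: `HasGeometricLaw.measure_eq_zero` shows it vanishes. -/
def HasGeometricLaw (X : Ω → ℕ) (μ : Measure Ω) (p : ℝ) : Prop :=
  ∀ k : ℕ, 1 ≤ k → μ {ω | X ω = k} = ENNReal.ofReal (p * (1 - p) ^ (k - 1))

noncomputable def geometricMGF (p s : ℝ) : ℝ := p * exp s / (1 - (1 - p) * exp s)

lemma geometricMGF_nonneg {p s : ℝ} (hp0 : 0 ≤ p) (hs : (1 - p) * exp s < 1) :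
    0 ≤ geometricMGF p s :=
  div_nonneg (by positivity) (sub_nonneg.2 hs.le)

namespace HasGeometricLaw

variable {X : Ω → ℕ} {p s : ℝ}

lemma lintegral_exp_mul_eq_add (hX : Measurable X) (hlaw : HasGeometricLaw X μ p)
    (hp0 : 0 ≤ p) (hp1 : p ≤ 1) (hs : (1 - p) * exp s < 1) :
    ∫⁻ ω, ENNReal.ofReal (exp (s * X ω)) ∂μ
      = μ {ω | X ω = 0} + ENNReal.ofReal (geometricMGF p s) := by
  have hq : 0 ≤ (1 - p) * exp s := by nlinarith [exp_pos s]
  have hterm : ∀ k : ℕ, ENNReal.ofReal (exp (s * (k + 1 : ℕ))) * μ {ω | X ω = k + 1}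
      = ENNReal.ofReal (p * exp s * ((1 - p) * exp s) ^ k) := by
    intro k
    rw [hlaw (k + 1) le_add_self, ← ENNReal.ofReal_mul (exp_nonneg _), Nat.add_sub_cancel,
      Nat.cast_succ, mul_add_one, exp_add, mul_pow, ← exp_nat_mul, mul_comm (k : ℝ) s]
    ring_nf
  rw [lintegral_comp_eq_tsum hX (fun k : ℕ => ENNReal.ofReal (exp (s * k))),
    tsum_eq_zero_add' ENNReal.summable]
  simp only [Nat.cast_zero, mul_zero, exp_zero, ENNReal.ofReal_one, one_mul, hterm]
  rw [← ENNReal.ofReal_tsum_of_nonneg (fun k => by positivity)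
      ((summable_geometric_of_lt_one hq hs).mul_left _),
    tsum_mul_left, tsum_geometric_of_lt_one hq hs, geometricMGF, div_eq_mul_inv]

variable [IsProbabilityMeasure μ]

/-- At `s = 0` the masses at `k ≥ 1` already sum to `1 = μ univ`. -/
lemma measure_eq_zero (hX : Measurable X) (hlaw : HasGeometricLaw X μ p) (hp0 : 0 < p)
    (hp1 : p ≤ 1) : μ {ω | X ω = 0} = 0 := by
  have h := hlaw.lintegral_exp_mul_eq_add hX hp0.le hp1 (s := 0) (by simpa using hp0)
  have hone : geometricMGF p 0 = 1 := by
    rw [geometricMGF, exp_zero, mul_one, mul_one, sub_sub_cancel, div_self hp0.ne']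
  simp only [zero_mul, exp_zero, ENNReal.ofReal_one, lintegral_const, measure_univ, mul_one,
    hone] at h
  simpa using h.symm

lemma lintegral_exp_mul (hX : Measurable X) (hlaw : HasGeometricLaw X μ p) (hp0 : 0 < p)
    (hp1 : p ≤ 1) (hs : (1 - p) * exp s < 1) :
    ∫⁻ ω, ENNReal.ofReal (exp (s * X ω)) ∂μ = ENNReal.ofReal (geometricMGF p s) := by
  rw [hlaw.lintegral_exp_mul_eq_add hX hp0.le hp1 hs, hlaw.measure_eq_zero hX hp0 hp1, zero_add]

lemma integrable_exp_mul (hX : Measurable X) (hlaw : HasGeometricLaw X μ p) (hp0 : 0 < p)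
    (hp1 : p ≤ 1) (hs : (1 - p) * exp s < 1) : Integrable (fun ω => exp (s * X ω)) μ := by
  refine ⟨(measurable_of_countable (fun k : ℕ => exp (s * k))).comp hX |>.aestronglyMeasurable, ?_⟩
  simp only [HasFiniteIntegral, Real.enorm_eq_ofReal (exp_nonneg _),
    hlaw.lintegral_exp_mul hX hp0 hp1 hs, ENNReal.ofReal_lt_top]

lemma mgf_eq (hX : Measurable X) (hlaw : HasGeometricLaw X μ p) (hp0 : 0 < p) (hp1 : p ≤ 1)
    (hs : (1 - p) * exp s < 1) : mgf (fun ω => (X ω : ℝ)) μ s = geometricMGF p s := by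
  rw [mgf, integral_eq_lintegral_of_nonneg_ae (ae_of_all _ fun ω => exp_nonneg _)
    (hlaw.integrable_exp_mul hX hp0 hp1 hs).aestronglyMeasurable,
    hlaw.lintegral_exp_mul hX hp0 hp1 hs, ENNReal.toReal_ofReal (geometricMGF_nonneg hp0.le hs)]

end HasGeometricLaw

end GeometricLaw

lemma iIndepFun.measure_ge_sum_le_exp_mul_pow {Ω ι : Type*} [MeasurableSpace Ω]
    {μ : Measure Ω} [IsProbabilityMeasure μ] {Y : ι → Ω → ℝ} (hindep : iIndepFun Y μ)
    (hmeas : ∀ i, Measurable (Y i)) {s M : ℝ} (hs : 0 ≤ s)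
    (hint : ∀ i, Integrable (fun ω => exp (s * Y i ω)) μ) (hmgf : ∀ i, mgf (Y i) μ s = M)
    (S : Finset ι) (a : ℝ) :
    μ {ω | a ≤ ∑ i ∈ S, Y i ω} ≤ ENNReal.ofReal (exp (-s * a) * M ^ S.card) := by
  have hchernoff := measure_ge_le_exp_mul_mgf a hs
    (hindep.integrable_exp_mul_sum hmeas (s := S) fun i _ => hint i)
  rw [hindep.mgf_sum hmeas, Finset.prod_congr rfl fun i _ => hmgf i, Finset.prod_const]
    at hchernoff
  rw [← ENNReal.ofReal_toReal (measure_ne_top μ _)]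
  refine ENNReal.ofReal_le_ofReal (le_of_eq_of_le ?_ hchernoff)
  simp only [Measure.real, Finset.sum_apply]

lemma two_mul_mul_exp_neg_le {y : ℝ} (hy : 0 ≤ y) : 2 * y * exp (-y) ≤ 1 - exp (-(2 * y)) := by
  have hsinh : 2 * sinh y * exp (-y) = 1 - exp (-(2 * y)) := by
    rw [sinh_eq, mul_div_cancel₀ _ two_ne_zero, sub_mul, ← exp_add, ← exp_add, add_neg_cancel,
      exp_zero, ← neg_add, ← two_mul]
  rw [← hsinh]
  gcongr
  exact self_le_sinh_iff.2 hy

lemma two_mul_div_two_sub_le_neg_log_one_sub {p : ℝ} (hp0 : 0 ≤ p) (hp1 : p < 1) :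
    2 * p / (2 - p) ≤ -log (1 - p) := by
  set x := p / (2 - p)
  have hx0 : 0 ≤ x := div_nonneg hp0 (by linarith)
  have hx1 : |x| < 1 := by
    rw [abs_of_nonneg hx0, div_lt_one (by linarith)]
    linarith
  have hlog : log (1 + x) - log (1 - x) = -log (1 - p) := by
    rw [← log_div (by positivity) (by linarith [abs_lt.1 hx1]), ← log_inv]
    have h2p : 2 - p ≠ 0 := by linarith
    rw [one_add_div h2p, one_sub_div h2p, div_div_div_cancel_right₀ h2p, sub_add_cancel,
      sub_sub, ← two_mul, ← mul_one_sub, div_mul_cancel_left₀ two_ne_zero]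
  have h := le_hasSum (hasSum_log_sub_log_of_abs_lt_one hx1) 0 fun k _ => by positivity
  rw [hlog] at h
  simpa [x, mul_div_assoc] using h

noncomputable def chernoffParam (p : ℝ) : ℝ := -log (1 - p) - p / 2

section ChernoffParam

variable {p c : ℝ}

lemma one_sub_mul_exp_chernoffParam (hp1 : p < 1) :
    (1 - p) * exp (chernoffParam p) = exp (-(p / 2)) := by
  have h1p : 1 - p ≠ 0 := by linarith
  rw [chernoffParam, exp_sub, exp_neg, exp_log (by linarith), exp_neg]
  field_simp

lemma le_chernoffParam (hp1 : p < 1) : p / 2 ≤ chernoffParam p := by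
  rw [chernoffParam]
  linarith [log_le_sub_one_of_pos (by linarith : 0 < 1 - p)]

lemma neg_log_one_sub_le_chernoffParam_mul (hp0 : 0 ≤ p) (hp1 : p < 1) (hc : 2 ≤ c) :
    -log (1 - p) ≤ chernoffParam p * c := by
  have h := le_chernoffParam hp1
  rw [chernoffParam] at h ⊢
  nlinarith

lemma geometricMGF_chernoffParam_le (hp0 : 0 < p) (hp1 : p < 1) :
    geometricMGF p (chernoffParam p) ≤ 2 * exp (chernoffParam p + p / 4) := by
  have hden : p / 2 * exp (-(p / 4)) ≤ 1 - exp (-(p / 2)) := by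
    have h := two_mul_mul_exp_neg_le (y := p / 4) (by positivity)
    rwa [show 2 * (p / 4) = p / 2 by ring] at h
  rw [geometricMGF, one_sub_mul_exp_chernoffParam hp1,
    div_le_iff₀ (sub_pos.2 (exp_lt_one_iff.2 (by linarith)))]
  calc p * exp (chernoffParam p)
      = 2 * exp (chernoffParam p + p / 4) * (p / 2 * exp (-(p / 4))) := by
        have h : exp (p / 4) * exp (-(p / 4)) = 1 := by rw [← exp_add, add_neg_cancel, exp_zero]
        rw [exp_add]
        linear_combination (-(p * exp (chernoffParam p))) * h
    _ ≤ 2 * exp (chernoffParam p + p / 4) * (1 - exp (-(p / 2))) := by gcongr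

lemma log_two_add_chernoffParam_le (hp0 : 0 < p) (hp1 : p < 1) (hc : 2 ≤ c) :
    log 2 + chernoffParam p + p / 4 + (2 * c - 3) / 4 ≤ chernoffParam p * c / p := by
  have hu := two_mul_div_two_sub_le_neg_log_one_sub hp0.le hp1
  rw [div_le_iff₀ (by linarith)] at hu
  have hlog2 : 2 * log 2 ≤ 3 / 2 := by linarith [log_two_lt_d9]
  have key : p * (log 2 + c - 3 / 4 - p / 4) * (2 - p) ≤ -log (1 - p) * (c - p) * (2 - p) := by
    nlinarith [mul_le_mul_of_nonneg_right hu (by linarith : 0 ≤ c - p),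
      mul_nonneg (mul_nonneg hp0.le hp0.le) (by linarith : 0 ≤ c - 2),
      mul_nonneg hp0.le
        (mul_nonneg (by linarith : 0 ≤ 3 / 2 - 2 * log 2) (by linarith : 0 ≤ 1 - p / 2)),
      mul_nonneg (mul_nonneg hp0.le hp0.le) (by linarith : 0 ≤ 2 - p)]
  have key' := le_of_mul_le_mul_right key (by linarith)
  rw [le_div_iff₀ hp0, chernoffParam]
  linarith

lemma exp_neg_chernoffParam_mul_geometricMGF_le (hp0 : 0 < p) (hp1 : p < 1) (hc : 2 ≤ c) :
    exp (-(chernoffParam p * c / p)) * geometricMGF p (chernoffParam p)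
      ≤ exp (-(2 * c - 3) / 4) := by
  calc exp (-(chernoffParam p * c / p)) * geometricMGF p (chernoffParam p)
      ≤ exp (-(chernoffParam p * c / p)) * (2 * exp (chernoffParam p + p / 4)) := by
        gcongr
        exact geometricMGF_chernoffParam_le hp0 hp1
    _ = exp (log 2 + chernoffParam p + p / 4 - chernoffParam p * c / p) := by
        rw [show log 2 + chernoffParam p + p / 4 - chernoffParam p * c / p
            = -(chernoffParam p * c / p) + chernoffParam p + p / 4 + log 2 by ring]
        simp only [exp_add, exp_log two_pos]
        ring
    _ ≤ exp (-(2 * c - 3) / 4) := by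
        gcongr
        linarith [log_two_add_chernoffParam_le hp0 hp1 hc]

lemma exp_neg_chernoffParam_mul_mul_geometricMGF_pow_le (hp0 : 0 < p) (hp1 : p < 1) {t : ℝ}
    (hc : 2 ≤ c) (ht : 0 ≤ t) (n : ℕ) :
    exp (-chernoffParam p * (c * (n / p + t))) * geometricMGF p (chernoffParam p) ^ n
      ≤ (1 - p) ^ t * exp (-(2 * c - 3) * n / 4) := by
  have hM : 0 ≤ geometricMGF p (chernoffParam p) :=
    geometricMGF_nonneg hp0.le
      ((one_sub_mul_exp_chernoffParam hp1).trans_lt (exp_lt_one_iff.2 (by linarith)))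
  have hsc := neg_log_one_sub_le_chernoffParam_mul hp0.le hp1 hc
  set s := chernoffParam p
  have htail : exp (-(s * c) * t) ≤ (1 - p) ^ t := by
    rw [rpow_def_of_pos (by linarith)]
    gcongr
    linarith
  have hexponent : -s * (c * (n / p + t)) = -(s * c) * t + n * -(s * c / p) := by
    field_simp
    ring
  calc exp (-s * (c * (n / p + t))) * geometricMGF p s ^ n
      = exp (-(s * c) * t) * (exp (-(s * c / p)) * geometricMGF p s) ^ n := by
        rw [hexponent, exp_add, mul_pow, ← exp_nat_mul, mul_assoc]
    _ ≤ (1 - p) ^ t * exp (-(2 * c - 3) / 4) ^ n := by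
        gcongr
        exact exp_neg_chernoffParam_mul_geometricMGF_le hp0 hp1 hc
    _ = (1 - p) ^ t * exp (-(2 * c - 3) * n / 4) := by
        rw [← exp_nat_mul]
        ring_nf

end ChernoffParam

theorem geometric_sum_tail_bound_general
    {Ω : Type*} [MeasureSpace Ω] [IsProbabilityMeasure (ℙ : Measure Ω)]
    (p : ℝ) (hp0 : 0 < p) (hp1 : p < 1)
    (X : ℕ → Ω → ℕ)
    (hmeas : ∀ i, Measurable (X i))
    (hindep : iIndepFun X ℙ)
    (hdist : ∀ i, ∀ k : ℕ, 1 ≤ k →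
      ℙ {ω | X i ω = k} = ENNReal.ofReal (p * (1 - p) ^ (k - 1)))
    (c t : ℝ) (hc : 2 ≤ c) (ht : 0 ≤ t) (n : ℕ) :
    ℙ {ω | c * ((n : ℝ) / p + t) ≤ ∑ i ∈ Finset.range n, (X i ω : ℝ)}
      ≤ ENNReal.ofReal ((1 - p) ^ t * Real.exp (-(2 * c - 3) * n / 4)) := by
  have hs : (1 - p) * exp (chernoffParam p) < 1 := by
    rw [one_sub_mul_exp_chernoffParam hp1, exp_lt_one_iff]
    linarith
  have hchernoff := iIndepFun.measure_ge_sum_le_exp_mul_pow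
    (hindep.comp (fun _ (k : ℕ) => (k : ℝ)) fun _ => measurable_of_countable _)
    (fun i => (measurable_of_countable _).comp (hmeas i))
    ((half_pos hp0).le.trans (le_chernoffParam hp1))
    (fun i => HasGeometricLaw.integrable_exp_mul (hmeas i) (hdist i) hp0 hp1.le hs)
    (fun i => HasGeometricLaw.mgf_eq (hmeas i) (hdist i) hp0 hp1.le hs)
    (Finset.range n) (c * (n / p + t))
  rw [Finset.card_range] at hchernoff
  exact hchernoff.trans (ENNReal.ofReal_le_ofReal
    (exp_neg_chernoffParam_mul_mul_geometricMGF_pow_le hp0 hp1 hc ht n))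

/-- Tails of sums of i.i.d. geometric random variables (success probability `p`,
supported on the positive integers, mean `1/p`):
for `c ≥ 2`, `t ≥ 0` and `n ≥ 1`,
`P(S_n ≥ c (n/p + t)) ≤ (1-p)^t · exp(-(2c-3) n / 4)`. -/
theorem geometric_sum_tail_bound
    {Ω : Type*} [MeasureSpace Ω] [IsProbabilityMeasure (ℙ : Measure Ω)]
    (p : ℝ) (hp0 : 0 < p) (hp1 : p < 1)
    (X : ℕ → Ω → ℕ)
    (hmeas : ∀ i, Measurable (X i))
    (hindep : iIndepFun X ℙ)
    (hdist : ∀ i, ∀ k : ℕ, 1 ≤ k →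
      ℙ {ω | X i ω = k} = ENNReal.ofReal (p * (1 - p) ^ (k - 1)))
    (c t : ℝ) (hc : 2 ≤ c) (ht : 0 ≤ t) (n : ℕ) (hn : 1 ≤ n) :
    ℙ {ω | c * ((n : ℝ) / p + t) ≤ ∑ i ∈ Finset.range n, (X i ω : ℝ)}
      ≤ ENNReal.ofReal ((1 - p) ^ t * Real.exp (-(2 * c - 3) * n / 4)) :=
  geometric_sum_tail_bound_general p hp0 hp1 X hmeas hindep hdist c t hc ht n
end

section
/- Let (X_k)_{k≥1} be i.i.d. random variables on a probability space taking values in [0,1], let μ := E[X_1], and let μ̂_n := (1/n)·∑_{k=1}^n X_k denote the empirical mean after n samples. Then for every real x ≥ 0 and every integer m ≥ 1, P(sup_{n ≥ m} (μ̂_n − μ) ≥ x) ≤ exp(−2·m·x²). -/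
/-!
For `t ≥ 0` the normalized exponential products
`M n = ∏_{k ≤ n} exp (t (X k - μ)) / E[exp (t (X k - μ))]` form a nonnegative martingale of
mean one, so Doob's maximal inequality gives Ville's bound `P(∃ n, M n ≥ a) ≤ 1 / a`.
Hoeffding's lemma `E[exp (t (X k - μ))] ≤ exp (t² / 8)` shows that, for `t = 4 y`, an empirical
mean `μ̂_n ≥ μ + y` with `n ≥ m` forces `M (n - 1) ≥ exp (2 m y²)`. Letting `y ↑ x` passes to the
supremum, which need not be attained.
-/

open MeasureTheory ProbabilityTheory Finset
open scoped ENNReal NNReal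

namespace ProbabilityTheory

variable {Ω : Type*} {mΩ : MeasurableSpace Ω} {P : Measure Ω} [IsFiniteMeasure P]

theorem iIndepFun.martingale_prod_range_succ {Z : ℕ → Ω → ℝ}
    (hZ : ∀ k, StronglyMeasurable (Z k)) (hind : iIndepFun Z P)
    (hint : ∀ k, Integrable (Z k) P) (hmean : ∀ k, P[Z k] = 1) :
    Martingale (fun n ↦ ∏ k ∈ range (n + 1), Z k) (Filtration.natural Z hZ) P := by
  set 𝒢 := Filtration.natural Z hZ
  have hadapted : StronglyAdapted 𝒢 fun n ↦ ∏ k ∈ range (n + 1), Z k := fun n ↦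
    Finset.stronglyMeasurable_prod _ fun k hk ↦
      (Filtration.stronglyAdapted_natural hZ k).mono (𝒢.mono (Nat.lt_succ_iff.1 (mem_range.1 hk)))
  have hint_prod : ∀ n, Integrable (∏ k ∈ range n, Z k) P := by
    intro n
    induction n with
    | zero => exact integrable_const (1 : ℝ)
    | succ n ih =>
      rw [prod_range_succ]
      exact (hind.indepFun_prod_range_succ (fun k ↦ (hZ k).measurable) n).integrable_mul ih (hint n)
  refine martingale_nat hadapted (fun n ↦ hint_prod _) fun n ↦ ?_
  have hindep : Indep (MeasurableSpace.comap (Z (n + 1)) inferInstance) (𝒢 n) P := by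
    have := indep_iSup_of_disjoint (fun k ↦ (hZ k).measurable.comap_le)
      ((iIndepFun_iff_iIndep _ _ _).1 hind) (S := {n + 1}) (T := Set.Iic n) (by simp)
    rw [_root_.iSup_singleton] at this
    exact this
  have hcond : P[Z (n + 1) | 𝒢 n] =ᵐ[P] fun _ ↦ 1 := by
    rw [← hmean (n + 1)]
    exact condExp_indep_eq (hZ (n + 1)).measurable.comap_le (𝒢.le n)
      (comap_measurable (Z (n + 1))).stronglyMeasurable hindep
  rw [show ∏ k ∈ range (n + 1 + 1), Z k = (∏ k ∈ range (n + 1), Z k) * Z (n + 1) from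
    prod_range_succ _ _]
  filter_upwards [condExp_mul_of_stronglyMeasurable_left (hadapted n)
    (by rw [← prod_range_succ]; exact hint_prod _) (hint (n + 1)), hcond] with ω h1 h2
  simp [h1, h2]

end ProbabilityTheory

namespace MeasureTheory

variable {Ω : Type*} {mΩ : MeasurableSpace Ω} {P : Measure Ω} [IsFiniteMeasure P]

theorem Martingale.mul_measure_exists_ge_le {f : ℕ → Ω → ℝ} {𝒢 : Filtration ℕ mΩ}
    (hf : Martingale f 𝒢 P) (hnonneg : 0 ≤ f) (ε : ℝ≥0) :
    ε * P {ω | ∃ n, (ε : ℝ) ≤ f n ω} ≤ ENNReal.ofReal (P[f 0]) := by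
  set A : ℕ → Set Ω := fun N ↦
    {ω | (ε : ℝ) ≤ (range (N + 1)).sup' nonempty_range_add_one fun k ↦ f k ω}
  have hunion : {ω | ∃ n, (ε : ℝ) ≤ f n ω} = ⋃ N, A N := by
    ext ω
    simp only [A, Set.mem_ofPred_eq, Set.mem_iUnion, le_sup'_iff, mem_range]
    exact ⟨fun ⟨n, hn⟩ ↦ ⟨n, n, n.lt_succ_self, hn⟩, fun ⟨_, k, _, hk⟩ ↦ ⟨k, hk⟩⟩
  have hmono : Monotone A := fun M N hMN ω hω ↦
    le_trans (α := ℝ) hω (sup'_mono _ (range_subset_range.2 (Nat.succ_le_succ hMN)) _)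
  rw [hunion, hmono.measure_iUnion, ENNReal.mul_iSup]
  refine iSup_le fun N ↦ (maximal_ineq hf.submartingale hnonneg N).trans
    (ENNReal.ofReal_le_ofReal ?_)
  calc ∫ ω in A N, f N ω ∂P ≤ ∫ ω, f N ω ∂P :=
        setIntegral_le_integral (hf.integrable N) (ae_of_all _ (hnonneg N))
    _ = P[f 0] := by simpa using (hf.setIntegral_eq N.zero_le MeasurableSet.univ).symm

end MeasureTheory

namespace ProbabilityTheory

open Real

variable {Ω : Type*} {mΩ : MeasurableSpace Ω} {P : Measure Ω} [IsProbabilityMeasure P]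
  {Y : ℕ → Ω → ℝ} {c : ℝ≥0}

lemma exp_mul_sum_range_sub_le_prod_exp_mul_div_mgf
    (h_subG : ∀ k, HasSubgaussianMGF (Y k) c P) {t : ℝ} (n : ℕ) (ω : Ω) :
    exp (t * ∑ k ∈ range n, Y k ω - n * (c * t ^ 2 / 2)) ≤
      ∏ k ∈ range n, exp (t * Y k ω) / mgf (Y k) P t := by
  have hmgf_pos k : 0 < mgf (Y k) P t := mgf_pos ((h_subG k).integrable_exp_mul t)
  rw [prod_div_distrib, ← exp_sum, le_div_iff₀ (prod_pos fun k _ ↦ hmgf_pos k), ← mul_sum]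
  calc exp (t * ∑ k ∈ range n, Y k ω - n * (c * t ^ 2 / 2)) * ∏ k ∈ range n, mgf (Y k) P t
      ≤ exp (t * ∑ k ∈ range n, Y k ω - n * (c * t ^ 2 / 2)) *
          ∏ _k ∈ range n, exp (c * t ^ 2 / 2) := by
        gcongr with k
        · exact fun k _ ↦ (hmgf_pos k).le
        · exact (h_subG k).mgf_le t
    _ = exp (t * ∑ k ∈ range n, Y k ω) := by
        rw [prod_const, card_range, ← exp_nat_mul, ← exp_add]
        ring_nf

lemma iIndepFun.measure_exists_prod_exp_mul_div_mgf_ge_le (h_indep : iIndepFun Y P)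
    (h_meas : ∀ k, Measurable (Y k)) {t : ℝ}
    (h_int : ∀ k, Integrable (fun ω ↦ exp (t * Y k ω)) P) (ε : ℝ≥0) :
    P {ω | ∃ n, (ε : ℝ) ≤ ∏ k ∈ range (n + 1), exp (t * Y k ω) / mgf (Y k) P t} ≤
      (ε : ℝ≥0∞)⁻¹ := by
  set Z : ℕ → Ω → ℝ := fun k ω ↦ exp (t * Y k ω) / mgf (Y k) P t
  have hZ_meas k : Measurable (Z k) := by fun_prop
  have hZ_mean k : P[Z k] = 1 := by
    rw [integral_div]
    exact div_self (mgf_pos (h_int k)).ne'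
  have hmart := iIndepFun.martingale_prod_range_succ (fun k ↦ (hZ_meas k).stronglyMeasurable)
    (h_indep.comp (fun k x ↦ exp (t * x) / mgf (Y k) P t) (fun k ↦ by fun_prop))
    (fun k ↦ (h_int k).div_const _) hZ_mean
  have hZ_nonneg : 0 ≤ fun n ↦ ∏ k ∈ range (n + 1), Z k := fun n ω ↦ by
    simp only [Pi.zero_apply, prod_apply]
    exact prod_nonneg fun k _ ↦ div_nonneg (exp_pos _).le mgf_nonneg
  have hville := hmart.mul_measure_exists_ge_le hZ_nonneg ε
  rw [zero_add, prod_range_one, hZ_mean, ENNReal.ofReal_one, mul_comm,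
    ← ENNReal.le_inv_iff_mul_le] at hville
  simpa only [prod_apply] using hville

lemma measure_exists_sum_range_ge_le_of_iIndepFun (h_indep : iIndepFun Y P)
    (h_meas : ∀ k, Measurable (Y k)) (h_subG : ∀ k, HasSubgaussianMGF (Y k) c P)
    {y : ℝ} (hy : 0 ≤ y) (m : ℕ) :
    P {ω | ∃ n, m ≤ n ∧ n * y ≤ ∑ k ∈ range n, Y k ω} ≤
      ENNReal.ofReal (exp (-(m * y ^ 2) / (2 * c))) := by
  rcases Nat.eq_zero_or_pos m with rfl | hm
  · simpa using prob_le_one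
  rcases c.coe_nonneg.eq_or_lt with hc | hc
  · simpa [← hc] using prob_le_one
  set t := y / c
  set ε := (exp (m * y ^ 2 / (2 * c))).toNNReal
  have hsub : {ω | ∃ n, m ≤ n ∧ n * y ≤ ∑ k ∈ range n, Y k ω} ⊆
      {ω | ∃ n, (ε : ℝ) ≤ ∏ k ∈ range (n + 1), exp (t * Y k ω) / mgf (Y k) P t} := by
    rintro ω ⟨n, hmn, hn⟩
    obtain ⟨n, rfl⟩ := Nat.exists_eq_add_of_le' (hm.trans_le hmn)
    refine ⟨n, (exp_mul_sum_range_sub_le_prod_exp_mul_div_mgf h_subG (n + 1) ω).trans' ?_⟩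
    rw [Real.coe_toNNReal _ (exp_pos _).le, exp_le_exp]
    have hct : c * t = y := mul_div_cancel₀ y hc.ne'
    have hyc : y ^ 2 / (2 * c) = t * y / 2 := by field_simp; rw [← hct]; ring
    have hct2 : c * t ^ 2 = t * y := by rw [← hct]; ring
    have hmn' : (m : ℝ) ≤ n + 1 := by exact_mod_cast hmn
    have ht : 0 ≤ t := div_nonneg hy hc.le
    push_cast at hn ⊢
    rw [mul_div_assoc, hyc, hct2]
    nlinarith [mul_le_mul_of_nonneg_left hn ht, mul_nonneg ht hy]
  calc P {ω | ∃ n, m ≤ n ∧ n * y ≤ ∑ k ∈ range n, Y k ω} ≤ (ε : ℝ≥0∞)⁻¹ :=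
        (measure_mono hsub).trans (h_indep.measure_exists_prod_exp_mul_div_mgf_ge_le h_meas
          (fun k ↦ (h_subG k).integrable_exp_mul t) ε)
    _ = ENNReal.ofReal (exp (-(m * y ^ 2) / (2 * c))) := by
        rw [neg_div, exp_neg, ENNReal.ofReal_inv_of_pos (exp_pos _)]
        rfl

end ProbabilityTheory

lemma exists_mul_le_sum_range_sub_of_lt_iSup {a : ℕ → ℝ} {μ y : ℝ} {m : ℕ}
    (h : y < ⨆ n : {k : ℕ // m ≤ k}, (∑ k ∈ range (n : ℕ), a k) / ((n : ℕ) : ℝ) - μ) :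
    ∃ n, m ≤ n ∧ n * y ≤ ∑ k ∈ range n, (a k - μ) := by
  have : Nonempty {k : ℕ // m ≤ k} := ⟨⟨m, le_rfl⟩⟩
  obtain ⟨⟨n, hmn⟩, hn⟩ := exists_lt_of_lt_ciSup h
  refine ⟨n, hmn, ?_⟩
  rw [sum_sub_distrib, sum_const, card_range, nsmul_eq_mul]
  rcases n.eq_zero_or_pos with rfl | hn0
  · simp
  · rw [lt_sub_iff_add_lt, lt_div_iff₀ (by exact_mod_cast hn0)] at hn
    linarith

open Real Filter Topology

theorem maximal_hoeffding_general
    {Ω : Type*} [MeasureSpace Ω] [IsProbabilityMeasure (ℙ : Measure Ω)]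
    (X : ℕ → Ω → ℝ)
    (hmeas : ∀ i, Measurable (X i))
    (hindep : iIndepFun X ℙ)
    (hident : ∀ i, Measure.map (X i) ℙ = Measure.map (X 0) ℙ)
    (hbound : ∀ i ω, X i ω ∈ Set.Icc (0 : ℝ) 1)
    (μ : ℝ) (hμ : μ = ∫ ω, X 0 ω)
    (x : ℝ) (hx : 0 ≤ x) (m : ℕ) :
    ℙ {ω | x ≤ ⨆ n : {k : ℕ // m ≤ k},
        ((∑ k ∈ Finset.range (n : ℕ), X k ω) / ((n : ℕ) : ℝ) - μ)}
      ≤ ENNReal.ofReal (Real.exp (-2 * m * x ^ 2)) := by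
  set E := {ω | x ≤ ⨆ n : {k : ℕ // m ≤ k},
    ((∑ k ∈ Finset.range (n : ℕ), X k ω) / ((n : ℕ) : ℝ) - μ)}
  have hmean i : ℙ[X i] = μ :=
    hμ ▸ IdentDistrib.integral_eq ⟨(hmeas i).aemeasurable, (hmeas 0).aemeasurable, hident i⟩
  have h_subG i : HasSubgaussianMGF (fun ω ↦ X i ω - μ) ((‖(1 : ℝ) - 0‖₊ / 2) ^ 2) ℙ :=
    hmean i ▸ hasSubgaussianMGF_of_mem_Icc (hmeas i).aemeasurable (ae_of_all _ (hbound i))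
  have h_indep : iIndepFun (fun i ω ↦ X i ω - μ) ℙ :=
    hindep.comp (fun _ z ↦ z - μ) fun _ ↦ measurable_sub_const μ
  have hbound_lt : ∀ y ∈ Set.Ico 0 x, ℙ E ≤ ENNReal.ofReal (exp (-2 * m * y ^ 2)) :=
    fun y ⟨hy, hyx⟩ ↦ by
      refine (measure_mono fun ω hω ↦ exists_mul_le_sum_range_sub_of_lt_iSup
        (hyx.trans_le hω)).trans ((measure_exists_sum_range_ge_le_of_iIndepFun h_indep
          (fun i ↦ (hmeas i).sub_const μ) h_subG hy m).trans_eq ?_)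
      norm_num
      ring_nf
  rcases hx.eq_or_lt with rfl | hx
  · simpa using prob_le_one
  have hcont : Continuous fun y ↦ ENNReal.ofReal (exp (-2 * m * y ^ 2)) :=
    ENNReal.continuous_ofReal.comp (by fun_prop)
  refine ge_of_tendsto
    (hcont.continuousAt.tendsto.mono_left (nhdsWithin_le_nhds (s := Set.Iio x))) ?_
  filter_upwards [Ioo_mem_nhdsLT hx] with y hy using hbound_lt y ⟨hy.1.le, hy.2⟩

/-- Maximal (time-uniform) version of Hoeffding's inequality: for i.i.d. `[0,1]`-valued
random variables with mean `μ` and empirical means `μ̂_n`, for every `x ≥ 0` and `m ≥ 1`,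
`P(sup_{n ≥ m} (μ̂_n − μ) ≥ x) ≤ exp(−2 m x²)`. -/
theorem maximal_hoeffding
    {Ω : Type*} [MeasureSpace Ω] [IsProbabilityMeasure (ℙ : Measure Ω)]
    (X : ℕ → Ω → ℝ)
    (hmeas : ∀ i, Measurable (X i))
    (hindep : iIndepFun X ℙ)
    (hident : ∀ i, Measure.map (X i) ℙ = Measure.map (X 0) ℙ)
    (hbound : ∀ i ω, X i ω ∈ Set.Icc (0 : ℝ) 1)
    (μ : ℝ) (hμ : μ = ∫ ω, X 0 ω)
    (x : ℝ) (hx : 0 ≤ x) (m : ℕ) (hm : 1 ≤ m) :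
    ℙ {ω | x ≤ ⨆ n : {k : ℕ // m ≤ k},
        ((∑ k ∈ Finset.range (n : ℕ), X k ω) / ((n : ℕ) : ℝ) - μ)}
      ≤ ENNReal.ofReal (Real.exp (-2 * m * x ^ 2)) :=
  maximal_hoeffding_general X hmeas hindep hident hbound μ hμ x hx m
end

section
/- Let S be a finite nonempty set. Let P, P̂ : S × S → ℝ be row-stochastic matrices (all entries nonnegative and every row sums to 1), let r, r̂ : S → ℝ, let g ∈ ℝ and h : S → ℝ satisfy the Poisson equation g + h(s) = r(s) + ∑_{s'∈S} P(s,s')·h(s') for every s ∈ S, and let μ̂ : S → ℝ be a stationary distribution of P̂, i.e., μ̂(s) ≥ 0 for all s, ∑_{s∈S} μ̂(s) = 1, and ∑_{s∈S} μ̂(s)·P̂(s,s') = μ̂(s') for every s' ∈ S. Then |∑_{s∈S} μ̂(s)·r̂(s) − g| ≤ max_{s∈S} ( |r̂(s) − r(s)| + (1/2)·(max_{s'} h(s') − min_{s'} h(s'))·∑_{s'∈S} |P̂(s,s') − P(s,s')| ). -/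
/-!
Subtracting the Poisson equation `g + h = r + P h` from the reward `r̂`, and using that `μ̂`
is `P̂`-stationary (so `μ̂ (P̂ h) = μ̂ h`), writes the gain deviation as the `μ̂`-average of
`(r̂ - r) + (P̂ - P) h`. Since every row of `P̂ - P` sums to zero, `h` may be recentred at the
midpoint of its range before pairing it with that row, which bounds the second term by
`sp(h) / 2 · ‖P̂(s,·) - P(s,·)‖₁`; an average is at most the maximum.
-/

open Finset Matrix

theorem abs_sum_mul_le_of_sum_eq_zero {ι : Type*} (s : Finset ι) {w h : ι → ℝ} {m M : ℝ}
    (hw : ∑ i ∈ s, w i = 0) (hm : ∀ i ∈ s, m ≤ h i) (hM : ∀ i ∈ s, h i ≤ M) :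
    |∑ i ∈ s, w i * h i| ≤ 1 / 2 * (M - m) * ∑ i ∈ s, |w i| := by
  set c := (M + m) / 2 with hc
  have hcentre : ∑ i ∈ s, w i * h i = ∑ i ∈ s, w i * (h i - c) := by
    simp only [mul_sub, sum_sub_distrib, ← sum_mul, hw, zero_mul, sub_zero]
  calc |∑ i ∈ s, w i * h i|
      ≤ ∑ i ∈ s, |w i| * |h i - c| := by
        rw [hcentre]
        simpa only [abs_mul] using abs_sum_le_sum_abs (fun i => w i * (h i - c)) s
    _ ≤ ∑ i ∈ s, |w i| * (1 / 2 * (M - m)) := by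
        refine sum_le_sum fun i hi => mul_le_mul_of_nonneg_left ?_ (abs_nonneg _)
        rw [abs_le]
        constructor <;> linarith [hm i hi, hM i hi, hc]
    _ = 1 / 2 * (M - m) * ∑ i ∈ s, |w i| := by rw [← sum_mul, mul_comm]

theorem abs_sum_mul_le_sup' {ι : Type*} {s : Finset ι} (hs : s.Nonempty) {μ x b : ι → ℝ}
    (hμ0 : ∀ i ∈ s, 0 ≤ μ i) (hμsum : ∑ i ∈ s, μ i = 1) (hx : ∀ i ∈ s, |x i| ≤ b i) :
    |∑ i ∈ s, μ i * x i| ≤ s.sup' hs b :=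
  calc |∑ i ∈ s, μ i * x i|
      ≤ ∑ i ∈ s, μ i * |x i| := by
        refine (abs_sum_le_sum_abs _ _).trans_eq (sum_congr rfl fun i hi => ?_)
        rw [abs_mul, abs_of_nonneg (hμ0 i hi)]
    _ ≤ ∑ i ∈ s, μ i * s.sup' hs b :=
        sum_le_sum fun i hi =>
          mul_le_mul_of_nonneg_left ((hx i hi).trans (le_sup' b hi)) (hμ0 i hi)
    _ = s.sup' hs b := by rw [← sum_mul, hμsum, one_mul]

theorem sum_mul_sum_mul_eq_of_stationary {S : Type*} [Fintype S] {P : S → S → ℝ}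
    {μ : S → ℝ} (hstat : ∀ s', ∑ s, μ s * P s s' = μ s') (f : S → ℝ) :
    ∑ s, μ s * ∑ s', P s s' * f s' = ∑ s, μ s * f s := by
  have hvec : μ ᵥ* of P = μ := funext hstat
  simpa only [dotProduct, mulVec, of_apply, hvec] using dotProduct_mulVec μ (of P) f

theorem gain_sub_eq_sum_mul {S : Type*} [Fintype S]
    {P Phat : S → S → ℝ} {r rhat h μhat : S → ℝ} {g : ℝ}
    (hPoisson : ∀ s, g + h s = r s + ∑ s', P s s' * h s')
    (hμsum : ∑ s, μhat s = 1) (hstat : ∀ s', ∑ s, μhat s * Phat s s' = μhat s') :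
    (∑ s, μhat s * rhat s) - g =
      ∑ s, μhat s * ((rhat s - r s) + ∑ s', (Phat s s' - P s s') * h s') := by
  have hrow : ∀ s, (rhat s - r s) + ∑ s', (Phat s s' - P s s') * h s' =
      (rhat s - g) + (∑ s', Phat s s' * h s' - h s) := by
    intro s
    rw [← sub_eq_zero]
    simp only [sub_mul, sum_sub_distrib]
    linarith [hPoisson s]
  simp only [hrow, mul_add, mul_sub, sum_add_distrib, sum_sub_distrib, ← sum_mul, hμsum,
    sum_mul_sum_mul_eq_of_stationary hstat]
  ring

theorem gain_deviation_general {S : Type*} [Fintype S] [Nonempty S]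
    (P Phat : S → S → ℝ) (r rhat : S → ℝ) (g : ℝ) (h : S → ℝ) (μhat : S → ℝ)
    (hProw : ∀ s, ∑ s', P s s' = 1)
    (hPhatrow : ∀ s, ∑ s', Phat s s' = 1)
    (hPoisson : ∀ s, g + h s = r s + ∑ s', P s s' * h s')
    (hμ0 : ∀ s, 0 ≤ μhat s) (hμsum : ∑ s, μhat s = 1)
    (hstat : ∀ s', ∑ s, μhat s * Phat s s' = μhat s') :
    |(∑ s, μhat s * rhat s) - g| ≤
      Finset.univ.sup' Finset.univ_nonempty (fun s =>
        |rhat s - r s| +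
          (1 / 2) * (Finset.univ.sup' Finset.univ_nonempty h
                      - Finset.univ.inf' Finset.univ_nonempty h)
            * ∑ s', |Phat s s' - P s s'|) := by
  rw [gain_sub_eq_sum_mul hPoisson hμsum hstat]
  refine abs_sum_mul_le_sup' univ_nonempty (fun s _ => hμ0 s) hμsum fun s _ => ?_
  have hdiff : ∑ s', (Phat s s' - P s s') = 0 := by
    rw [sum_sub_distrib, hPhatrow, hProw, sub_self]
  exact (abs_add_le _ _).trans <| add_le_add_right
    (abs_sum_mul_le_of_sum_eq_zero univ hdiff (fun s' hs' => inf'_le h hs')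
      (fun s' hs' => le_sup' h hs')) _

/-- Sensibility of the gain to parameters: if `(g, h)` solves the Poisson equation
`g + h = r + P h` for the row-stochastic matrix `P`, and `μ̂` is a stationary
distribution of the row-stochastic matrix `P̂`, then the perturbed gain `∑ μ̂ r̂`
deviates from `g` by at most
`max_s ( |r̂(s) − r(s)| + (1/2)·sp(h)·‖P̂(s,·) − P(s,·)‖₁ )`. -/
theorem gain_deviation {S : Type*} [Fintype S] [Nonempty S]
    (P Phat : S → S → ℝ) (r rhat : S → ℝ) (g : ℝ) (h : S → ℝ) (μhat : S → ℝ)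
    (hP0 : ∀ s s', 0 ≤ P s s') (hProw : ∀ s, ∑ s', P s s' = 1)
    (hPhat0 : ∀ s s', 0 ≤ Phat s s') (hPhatrow : ∀ s, ∑ s', Phat s s' = 1)
    (hPoisson : ∀ s, g + h s = r s + ∑ s', P s s' * h s')
    (hμ0 : ∀ s, 0 ≤ μhat s) (hμsum : ∑ s, μhat s = 1)
    (hstat : ∀ s', ∑ s, μhat s * Phat s s' = μhat s') :
    |(∑ s, μhat s * rhat s) - g| ≤
      Finset.univ.sup' Finset.univ_nonempty (fun s =>
        |rhat s - r s| +
          (1 / 2) * (Finset.univ.sup' Finset.univ_nonempty h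
                      - Finset.univ.inf' Finset.univ_nonempty h)
            * ∑ s', |Phat s s' - P s s'|) :=
  gain_deviation_general P Phat r rhat g h μhat hProw hPhatrow hPoisson hμ0 hμsum hstat
end
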